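/- arXiv:0909.3114 — 5 statements merged into one kernel-verified Lean document; each statement's English description precedes it below -/
import Mathlib

section
/- Discrete Leibniz rule: for discrete forms φ, ψ on the cochain complex K(4) with matrix coefficients, the coboundary operator satisfies d^c(φ ∪ ψ) = d^c φ ∪ ψ + (-1)^p φ ∪ d^c ψ, where p is the dimension of φ. -/
open Finset

/-- A basis element of the cochain complex `K(4) = K⊗K⊗K⊗K`: in each of the 4
tensor factors either `x^j` (`false`, index `j`) or `e^j` (`true`, index `j`). -/
abbrev KCell := Fin 4 → Bool × ℤ

/-- A discrete form on `K(4)` with `gl(2,ℂ)`-valued coefficients. -/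
abbrev KForm := KCell → Matrix (Fin 2) (Fin 2) ℂ

/-- The dimension of a basis element of `K(4)`: the number of `e`-factors. -/
def kdim (b : KCell) : ℕ := (univ.filter fun i => (b i).1).card

/-- The set of positions of the 1-dimensional factors `e` in a basis element. -/
def eSet (b : KCell) : Finset (Fin 4) := univ.filter fun i => (b i).1

/-- The left factor of the decomposition of `b` determined by the subset `T` of
`e`-positions coming from the left: `e^{j_i}` at positions in `T`, `x^{j_i}`
elsewhere. -/
def leftOf (b : KCell) (T : Finset (Fin 4)) : KCell :=
  fun i => (decide (i ∈ T), (b i).2)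

/-- The right factor of the decomposition of `b` determined by `T`: at a
position `i ∈ T` the rule `e^j ∪ x^{τj} = e^j` forces `x^{j_i + 1}`, at a
position of `e` not in `T` the rule `x^j ∪ e^j = e^j` forces `e^{j_i}`, and
elsewhere `x^j ∪ x^j = x^j` forces `x^{j_i}`. -/
def rightOf (b : KCell) (T : Finset (Fin 4)) : KCell :=
  fun i => ((b i).1 && decide (i ∉ T), (b i).2 + if i ∈ T then 1 else 0)

/-- The sign coming from iterating the rule
`(s_(p) ⊗ s^j) ∪ (s_(q) ⊗ s^μ) = Q(j,q)(s_(p) ∪ s_(q)) ⊗ (s^j ∪ s^μ)`, where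
`Q(j,q) = -1` iff both `s^j` and `s_(q)` are odd-dimensional. -/
def cupSign (b : KCell) (T : Finset (Fin 4)) : ℤ :=
  (-1) ^ ((univ.filter fun p : Fin 4 × Fin 4 =>
      p.1 < p.2 ∧ p.2 ∈ T ∧ p.1 ∈ eSet b \ T).card)

/-- The cup product of discrete forms on `K(4)`: coefficients multiply as
matrices, and the basis decompositions are governed by the 1-dimensional rules
`x^j ∪ x^j = x^j`, `e^j ∪ x^{τj} = e^j`, `x^j ∪ e^j = e^j` together with the
sign rule `Q`. -/
noncomputable def cup (φ ψ : KForm) : KForm := fun b =>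
  ∑ T ∈ (eSet b).powerset,
    (cupSign b T : ℂ) • (φ (leftOf b T) * ψ (rightOf b T))

/-- The coboundary operator `d^c` on `K(4)`, dual to the boundary operator `∂`
via the pairing: on a basis element it replaces one `e`-factor by the
difference of its endpoint `x`-factors, with the Koszul sign. -/
noncomputable def dc (φ : KForm) : KForm := fun b =>
  ∑ i ∈ eSet b,
    ((-1 : ℂ) ^ (((eSet b).filter fun i' => i' < i).card)) •
      (φ (Function.update b i (false, (b i).2 + 1)) -
       φ (Function.update b i (false, (b i).2)))

/-!
Every term of the three sums is indexed by a position `i` of an `e`-factor of `b` together with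
the set `S ⊆ eSet b \ {i}` of the other `e`-positions carried by the left factor: in `d^c φ ∪ ψ`
the face `i` is taken on the left factor (`T = insert i S`), in `φ ∪ d^c ψ` on the right one
(`T = S`). Writing `L = leftOf b S`, `R = rightOf b S` and `±` for the two endpoints of the face,
the terms are `φ L⁺ ψ R⁺ - φ L ψ R⁻`, `(φ L⁺ - φ L) ψ R⁺` and `φ L (ψ R⁺ - ψ R⁻)`, which cancel,
provided the three signs agree. The Koszul signs are counts of inversions between the
`e`-positions of the two factors, and their agreement is a counting identity on subsets of
`Fin 4`; the degree of `φ` enters only through `(-1) ^ p • φ L = (-1) ^ #S • φ L`.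
-/

namespace Finset

variable {α M : Type*} [DecidableEq α] [AddCommMonoid M]

lemma sum_powerset_sum_mem (E : Finset α) (f : Finset α → α → M) :
    ∑ T ∈ E.powerset, ∑ i ∈ T, f T i
      = ∑ i ∈ E, ∑ S ∈ (E.erase i).powerset, f (insert i S) i := by
  calc ∑ T ∈ E.powerset, ∑ i ∈ T, f T i
      = ∑ T ∈ E.powerset, ∑ i ∈ E, if i ∈ T then f T i else 0 := by
        refine sum_congr rfl fun T hT => ?_
        rw [← sum_filter, filter_mem_eq_inter, inter_eq_right.mpr (mem_powerset.mp hT)]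
    _ = ∑ i ∈ E, ∑ T ∈ E.powerset, if i ∈ T then f T i else 0 := sum_comm
    _ = ∑ i ∈ E, ∑ S ∈ (E.erase i).powerset, f (insert i S) i := by
        refine sum_congr rfl fun i hi => ?_
        conv_lhs => rw [← insert_erase hi]
        rw [sum_powerset_insert (notMem_erase i E), sum_eq_zero fun S hS =>
          if_neg (notMem_mono (mem_powerset.mp hS) (notMem_erase i E)), zero_add]
        exact sum_congr rfl fun S _ => if_pos (mem_insert_self i S)

lemma sum_powerset_sum_sdiff (E : Finset α) (f : Finset α → α → M) :
    ∑ T ∈ E.powerset, ∑ i ∈ E \ T, f T i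
      = ∑ i ∈ E, ∑ S ∈ (E.erase i).powerset, f S i := by
  rw [sum_comm' (t' := E) (s' := fun i => (E.erase i).powerset)]
  intro T i
  simp only [mem_powerset, mem_sdiff, subset_erase]
  tauto

end Finset

def cupInversions (E T : Finset (Fin 4)) : ℕ :=
  #{p : Fin 4 × Fin 4 | p.1 < p.2 ∧ p.2 ∈ T ∧ p.1 ∈ E \ T}

lemma cupSign_eq_neg_one_pow (b : KCell) (T : Finset (Fin 4)) :
    cupSign b T = (-1) ^ cupInversions (eSet b) T := rfl

lemma cupInversions_insert :
    ∀ E S : Finset (Fin 4), ∀ i ∈ E, S ⊆ E.erase i →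
      #{k ∈ E | k < i} + cupInversions (E.erase i) S
        = cupInversions E (insert i S) + #{k ∈ S | k < i} := by
  decide

lemma cupInversions_erase :
    ∀ E S : Finset (Fin 4), ∀ i ∈ E, S ⊆ E.erase i →
      #{k ∈ E | k < i} + cupInversions (E.erase i) S + 2 * #{k ∈ S | i < k}
        = #S + cupInversions E S + #{k ∈ E \ S | k < i} := by
  decide

lemma eSet_update_false (b : KCell) (i : Fin 4) (z : ℤ) :
    eSet (Function.update b i (false, z)) = (eSet b).erase i := by
  ext k
  by_cases h : k = i <;> simp [eSet, Function.update_apply, h]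

lemma eSet_leftOf (b : KCell) (T : Finset (Fin 4)) : eSet (leftOf b T) = T := by
  ext k; simp [eSet, leftOf]

lemma eSet_rightOf (b : KCell) (T : Finset (Fin 4)) : eSet (rightOf b T) = eSet b \ T := by
  ext k; simp [eSet, rightOf]

lemma kdim_leftOf (b : KCell) (T : Finset (Fin 4)) : kdim (leftOf b T) = #T :=
  congrArg card (eSet_leftOf b T)

lemma leftOf_update_of_notMem (b : KCell) {T : Finset (Fin 4)} {i : Fin 4} (hi : i ∉ T)
    (x : Bool × ℤ) :
    leftOf (Function.update b i x) T = Function.update (leftOf b T) i (false, x.2) := by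
  funext k
  by_cases h : k = i
  · subst h; simp [leftOf, hi]
  · simp [leftOf, h]

lemma update_leftOf_of_notMem (b : KCell) {T : Finset (Fin 4)} {i : Fin 4} (hi : i ∉ T) :
    Function.update (leftOf b T) i (false, (b i).2) = leftOf b T :=
  Function.update_eq_self_iff.mpr (by simp [leftOf, hi])

lemma update_leftOf_insert (b : KCell) (T : Finset (Fin 4)) (i : Fin 4) (x : Bool × ℤ) :
    Function.update (leftOf b (insert i T)) i x = Function.update (leftOf b T) i x := by
  funext k
  by_cases h : k = i
  · subst h; simp
  · simp [leftOf, h]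

lemma rightOf_update_of_notMem (b : KCell) {T : Finset (Fin 4)} {i : Fin 4} (hi : i ∉ T)
    (x : Bool × ℤ) :
    rightOf (Function.update b i x) T = Function.update (rightOf b T) i x := by
  funext k
  by_cases h : k = i
  · subst h; simp [rightOf, hi]
  · simp [rightOf, h]

lemma rightOf_apply_snd_of_notMem {b : KCell} {T : Finset (Fin 4)} {i : Fin 4} (hi : i ∉ T) :
    (rightOf b T i).2 = (b i).2 := by
  simp [rightOf, hi]

lemma rightOf_insert (b : KCell) (T : Finset (Fin 4)) (i : Fin 4) :
    rightOf b (insert i T) = Function.update (rightOf b T) i (false, (b i).2 + 1) := by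
  funext k
  by_cases h : k = i
  · subst h; simp [rightOf]
  · simp [rightOf, h]

lemma neg_one_pow_smul_eq_of_kdim {p : ℕ} {φ : KForm} (hφ : ∀ b : KCell, kdim b ≠ p → φ b = 0)
    (c : KCell) : (-1 : ℂ) ^ p • φ c = (-1 : ℂ) ^ kdim c • φ c := by
  by_cases h : kdim c = p
  · rw [h]
  · rw [hφ c h, smul_zero, smul_zero]

section Expansion

variable (φ ψ : KForm) (b : KCell)

lemma dc_cup_apply :
    dc (cup φ ψ) b = ∑ i ∈ eSet b, ∑ S ∈ ((eSet b).erase i).powerset,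
      (-1 : ℂ) ^ (#{k ∈ eSet b | k < i} + cupInversions ((eSet b).erase i) S) •
        (φ (Function.update (leftOf b S) i (false, (b i).2 + 1)) *
            ψ (Function.update (rightOf b S) i (false, (b i).2 + 1)) -
          φ (leftOf b S) * ψ (Function.update (rightOf b S) i (false, (b i).2))) := by
  simp only [dc, cup, eSet_update_false, cupSign_eq_neg_one_pow, Int.cast_pow, Int.cast_neg,
    Int.cast_one]
  refine sum_congr rfl fun i _ => ?_
  rw [← sum_sub_distrib, smul_sum]
  refine sum_congr rfl fun S hS => ?_
  have hiS := (subset_erase.mp (mem_powerset.mp hS)).2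
  rw [leftOf_update_of_notMem _ hiS, leftOf_update_of_notMem _ hiS, update_leftOf_of_notMem _ hiS,
    rightOf_update_of_notMem _ hiS, rightOf_update_of_notMem _ hiS, ← smul_sub, smul_smul,
    ← pow_add]

lemma cup_dc_left_apply :
    cup (dc φ) ψ b = ∑ i ∈ eSet b, ∑ S ∈ ((eSet b).erase i).powerset,
      (-1 : ℂ) ^ (cupInversions (eSet b) (insert i S) + #{k ∈ S | k < i}) •
        ((φ (Function.update (leftOf b S) i (false, (b i).2 + 1)) - φ (leftOf b S)) *
          ψ (Function.update (rightOf b S) i (false, (b i).2 + 1))) := by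
  have hsplit : cup (dc φ) ψ b = ∑ T ∈ (eSet b).powerset, ∑ i ∈ T,
      (-1 : ℂ) ^ (cupInversions (eSet b) T + #{k ∈ T | k < i}) •
        ((φ (Function.update (leftOf b T) i (false, (b i).2 + 1)) -
            φ (Function.update (leftOf b T) i (false, (b i).2))) * ψ (rightOf b T)) := by
    simp only [cup, dc, eSet_leftOf, cupSign_eq_neg_one_pow, Int.cast_pow, Int.cast_neg,
      Int.cast_one]
    refine sum_congr rfl fun T _ => ?_
    rw [sum_mul, smul_sum]
    refine sum_congr rfl fun i _ => ?_
    rw [smul_mul_assoc, smul_smul, ← pow_add]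
    rfl
  rw [hsplit, sum_powerset_sum_mem]
  refine sum_congr rfl fun i _ => sum_congr rfl fun S hS => ?_
  have hiS := (subset_erase.mp (mem_powerset.mp hS)).2
  rw [update_leftOf_insert, update_leftOf_insert, update_leftOf_of_notMem _ hiS, rightOf_insert,
    filter_insert, if_neg (lt_irrefl i)]

lemma neg_one_pow_smul_cup_dc_right_apply {p : ℕ} (hφ : ∀ b : KCell, kdim b ≠ p → φ b = 0) :
    (-1 : ℂ) ^ p • cup φ (dc ψ) b = ∑ i ∈ eSet b, ∑ S ∈ ((eSet b).erase i).powerset,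
      (-1 : ℂ) ^ (#S + cupInversions (eSet b) S + #{k ∈ eSet b \ S | k < i}) •
        (φ (leftOf b S) * (ψ (Function.update (rightOf b S) i (false, (b i).2 + 1)) -
          ψ (Function.update (rightOf b S) i (false, (b i).2)))) := by
  have hsplit : (-1 : ℂ) ^ p • cup φ (dc ψ) b = ∑ T ∈ (eSet b).powerset, ∑ i ∈ eSet b \ T,
      (-1 : ℂ) ^ (#T + cupInversions (eSet b) T + #{k ∈ eSet b \ T | k < i}) •
        (φ (leftOf b T) * (ψ (Function.update (rightOf b T) i (false, (rightOf b T i).2 + 1)) -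
          ψ (Function.update (rightOf b T) i (false, (rightOf b T i).2)))) := by
    simp only [cup, dc, eSet_rightOf, cupSign_eq_neg_one_pow, Int.cast_pow, Int.cast_neg,
      Int.cast_one, smul_sum]
    refine sum_congr rfl fun T _ => ?_
    rw [mul_sum, smul_sum, smul_sum]
    refine sum_congr rfl fun i _ => ?_
    rw [smul_comm, ← smul_mul_assoc, neg_one_pow_smul_eq_of_kdim hφ, kdim_leftOf, smul_mul_assoc,
      mul_smul_comm, smul_smul, smul_smul, ← pow_add, ← pow_add, add_comm (cupInversions _ T)]
  rw [hsplit, sum_powerset_sum_sdiff]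
  refine sum_congr rfl fun i _ => sum_congr rfl fun S hS => ?_
  rw [rightOf_apply_snd_of_notMem ((subset_erase.mp (mem_powerset.mp hS)).2)]

end Expansion

/-- Discrete Leibniz rule: for discrete forms `φ, ψ` on `K(4)` with matrix
coefficients, `d^c(φ ∪ ψ) = d^cφ ∪ ψ + (-1)^p φ ∪ d^cψ`, where `p` is the
dimension of `φ`. -/
theorem dc_cup_leibniz (p : ℕ) (φ ψ : KForm)
    (hφ : ∀ b : KCell, kdim b ≠ p → φ b = 0) :
    dc (cup φ ψ) = cup (dc φ) ψ + ((-1 : ℂ) ^ p) • cup φ (dc ψ) := by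
  funext b
  rw [Pi.add_apply, Pi.smul_apply, dc_cup_apply, cup_dc_left_apply,
    neg_one_pow_smul_cup_dc_right_apply φ ψ b hφ, ← sum_add_distrib]
  refine sum_congr rfl fun i hi => ?_
  rw [← sum_add_distrib]
  refine sum_congr rfl fun S hS => ?_
  have hSE := mem_powerset.mp hS
  have hsign : (-1 : ℂ) ^ (#S + cupInversions (eSet b) S + #{k ∈ eSet b \ S | k < i})
      = (-1) ^ (#{k ∈ eSet b | k < i} + cupInversions ((eSet b).erase i) S) := by
    rw [← cupInversions_erase _ _ i hi hSE, pow_add _ _ (2 * _), pow_mul, neg_one_sq, one_pow,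
      mul_one]
  rw [← cupInversions_insert _ _ i hi hSE, hsign, ← smul_add, sub_mul, mul_sub, sub_add_sub_cancel]
end

section
/- Discrete self-duality of e ∪ ē: with e = Σ_k (e₁^k + e₂^k 𝐢 + e₃^k 𝐣 + e₄^k 𝐤), the 2-form e ∪ ē equals -2[(ε₁₂+ε₃₄)𝐢 + (ε₁₃-ε₂₄)𝐣 + (ε₁₄+ε₂₃)𝐤], and this 2-form is self-dual: ∗ι̃(e ∪ ē) = e ∪ ē. -/
/-! The imaginary units satisfy `ū_j = -u_j` and pairwise anticommute, so with `u₁ = 1` the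
components of `e ∪ ē` are `F^{1j} = -2u_j` and `F^{ij} = -2u_iu_j` for `2 ≤ i < j`.
Self-duality `F^{1k} = ±F^{ij}` is then exactly Hamilton's `𝐣𝐤 = 𝐢`, `𝐤𝐢 = 𝐣`, `𝐢𝐣 = 𝐤`. -/

/-- The quaternionic units `1, 𝐢, 𝐣, 𝐤` appearing as the coefficients of the
1-form `e = e₁ + e₂𝐢 + e₃𝐣 + e₄𝐤`. -/
noncomputable def qu : Fin 4 → Quaternion ℝ :=
  ![1, ⟨0, 1, 0, 0⟩, ⟨0, 0, 1, 0⟩, ⟨0, 0, 0, 1⟩]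

/-- The quaternionic component of the 2-form `e ∪ ē` on `ε_{ij}` (`i < j`):
since `e_i ∪ e_j = ε_{ij}` and `e_j ∪ e_i = -ε_{ij}`, it is
`u_i·conj(u_j) - u_j·conj(u_i)`. -/
noncomputable def eCupEbar (i j : Fin 4) : Quaternion ℝ :=
  qu i * star (qu j) - qu j * star (qu i)

@[simp] lemma re_qu (i : Fin 4) : (qu i).re = if i = 0 then 1 else 0 := by fin_cases i <;> rfl
@[simp] lemma imI_qu (i : Fin 4) : (qu i).imI = if i = 1 then 1 else 0 := by fin_cases i <;> rfl
@[simp] lemma imJ_qu (i : Fin 4) : (qu i).imJ = if i = 2 then 1 else 0 := by fin_cases i <;> rfl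
@[simp] lemma imK_qu (i : Fin 4) : (qu i).imK = if i = 3 then 1 else 0 := by fin_cases i <;> rfl

lemma qu_zero : qu 0 = 1 := rfl

lemma star_qu {j : Fin 4} (hj : j ≠ 0) : star (qu j) = -qu j := by
  ext <;> simp [hj]

lemma qu_mul_qu_anticomm {i j : Fin 4} (hi : i ≠ 0) (hj : j ≠ 0) (hij : i ≠ j) :
    qu j * qu i = -(qu i * qu j) := by
  fin_cases i <;> fin_cases j <;> first
    | exact absurd rfl ‹_›
    | ext <;> simp [Quaternion.re_mul, Quaternion.imI_mul, Quaternion.imJ_mul, Quaternion.imK_mul]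

lemma qu_one_mul_qu_two : qu 1 * qu 2 = qu 3 := by
  ext <;> simp [Quaternion.re_mul, Quaternion.imI_mul, Quaternion.imJ_mul, Quaternion.imK_mul]

lemma qu_two_mul_qu_three : qu 2 * qu 3 = qu 1 := by
  ext <;> simp [Quaternion.re_mul, Quaternion.imI_mul, Quaternion.imJ_mul, Quaternion.imK_mul]

lemma qu_one_mul_qu_three : qu 1 * qu 3 = -qu 2 := by
  ext <;> simp [Quaternion.re_mul, Quaternion.imI_mul, Quaternion.imJ_mul, Quaternion.imK_mul]

lemma eCupEbar_zero_left {j : Fin 4} (hj : j ≠ 0) : eCupEbar 0 j = (-2 : ℝ) • qu j := by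
  rw [eCupEbar, star_qu hj, qu_zero, star_one, neg_smul, two_smul]
  noncomm_ring

lemma eCupEbar_of_ne_zero {i j : Fin 4} (hi : i ≠ 0) (hj : j ≠ 0) (hij : i ≠ j) :
    eCupEbar i j = (-2 : ℝ) • (qu i * qu j) := by
  rw [eCupEbar, star_qu hi, star_qu hj, mul_neg, mul_neg, qu_mul_qu_anticomm hi hj hij, neg_smul,
    two_smul]
  noncomm_ring

/-- Discrete self-duality of `e ∪ ē`: the 2-form `e ∪ ē` equals
`-2[(ε₁₂+ε₃₄)𝐢 + (ε₁₃-ε₂₄)𝐣 + (ε₁₄+ε₂₃)𝐤]`, i.e. its components are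
`F^{12} = F^{34} = -2𝐢`, `F^{13} = -2𝐣`, `F^{24} = 2𝐣`, `F^{14} = F^{23} = -2𝐤`,
and these satisfy the self-duality relations `∗ι̃(e ∪ ē) = e ∪ ē`, i.e.
`F^{12} = F^{34}`, `F^{13} = -F^{24}`, `F^{14} = F^{23}`. -/
theorem eCupEbar_selfDual :
    (eCupEbar 0 1 = ⟨0, -2, 0, 0⟩ ∧ eCupEbar 2 3 = ⟨0, -2, 0, 0⟩ ∧
     eCupEbar 0 2 = ⟨0, 0, -2, 0⟩ ∧ eCupEbar 1 3 = ⟨0, 0, 2, 0⟩ ∧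
     eCupEbar 0 3 = ⟨0, 0, 0, -2⟩ ∧ eCupEbar 1 2 = ⟨0, 0, 0, -2⟩) ∧
    (eCupEbar 0 1 = eCupEbar 2 3 ∧ eCupEbar 0 2 = - eCupEbar 1 3 ∧
     eCupEbar 0 3 = eCupEbar 1 2) := by
  have hF12 : eCupEbar 0 1 = (-2 : ℝ) • qu 1 := eCupEbar_zero_left (by decide)
  have hF13 : eCupEbar 0 2 = (-2 : ℝ) • qu 2 := eCupEbar_zero_left (by decide)
  have hF14 : eCupEbar 0 3 = (-2 : ℝ) • qu 3 := eCupEbar_zero_left (by decide)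
  have hF34 : eCupEbar 2 3 = (-2 : ℝ) • qu 1 := by
    rw [eCupEbar_of_ne_zero (by decide) (by decide) (by decide), qu_two_mul_qu_three]
  have hF24 : eCupEbar 1 3 = -((-2 : ℝ) • qu 2) := by
    rw [eCupEbar_of_ne_zero (by decide) (by decide) (by decide), qu_one_mul_qu_three, smul_neg]
  have hF23 : eCupEbar 1 2 = (-2 : ℝ) • qu 3 := by
    rw [eCupEbar_of_ne_zero (by decide) (by decide) (by decide), qu_one_mul_qu_two]
  refine ⟨?_, by rw [hF12, hF34], by rw [hF13, hF24, neg_neg], by rw [hF14, hF23]⟩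
  rw [hF12, hF34, hF13, hF24, hF14, hF23]
  refine ⟨?_, ?_, ?_, ?_, ?_, ?_⟩ <;> ext <;> simp
end

section
/- Vanishing curvature for pure gauge: if f = x⁻¹ where x is the quaternionic 0-form with coefficients κ = k₁ + k₂𝐢 + k₃𝐣 + k₄𝐤 ≠ 0, and A = x⁻¹ ∪ d^c x, then the discrete curvature F = d^c A + A ∪ A equals 0. -/
/-- Multi-indices `k = (k₁,k₂,k₃,k₄)` of the complex `K(4)`. -/
abbrev Idx := Fin 4 → ℤ

/-- The shift operator `τ_i` incrementing the `i`-th index. -/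
def tau (i : Fin 4) (k : Idx) : Idx := Function.update k i (k i + 1)

/-- The quaternion `κ = k₁ + k₂𝐢 + k₃𝐣 + k₄𝐤`, the coefficient of the
quaternionic 0-form `x` at index `k`. -/
noncomputable def kappa (k : Idx) : Quaternion ℝ := ⟨k 0, k 1, k 2, k 3⟩

/-- The pure gauge connection `A = x⁻¹ ∪ d^c x`: its components are
`A^i_k = κ_k⁻¹ (κ_{τ_i k} - κ_k)`. -/
noncomputable def pureGauge (k : Idx) (i : Fin 4) : Quaternion ℝ :=
  (kappa k)⁻¹ * (kappa (tau i k) - kappa k)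

/-!
Writing `g(p, q) = κ_p⁻¹ κ_q` for the parallel transport of the pure gauge, `A = g - 1` and `g`
is multiplicative along paths: `g(k, τᵢk) g(τᵢk, τᵢτⱼk) = g(k, τᵢτⱼk) = g(k, τⱼk) g(τⱼk, τᵢτⱼk)`.
For any `A = g - 1` the curvature around the square expands to the difference of the transports
along its two sides, which therefore vanishes.
-/

lemma tau_comm (i j : Fin 4) (k : Idx) : tau i (tau j k) = tau j (tau i k) := by
  by_cases hij : i = j
  · subst hij; rfl
  · simp only [tau]
    rw [Function.update_of_ne hij, Function.update_of_ne (Ne.symm hij), Function.update_comm hij]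

theorem curvature_sub_one_eq_zero {R : Type*} [Ring R] {p q r s : R} (h : p * q = r * s) :
    ((q - 1) - (r - 1)) - ((s - 1) - (p - 1)) + (p - 1) * (q - 1) - (r - 1) * (s - 1) = 0 := by
  calc ((q - 1) - (r - 1)) - ((s - 1) - (p - 1)) + (p - 1) * (q - 1) - (r - 1) * (s - 1)
      = p * q - r * s := by noncomm_ring
    _ = 0 := by rw [h, sub_self]

lemma pureGauge_eq_sub_one {k : Idx} (h : kappa k ≠ 0) (i : Fin 4) :
    pureGauge k i = (kappa k)⁻¹ * kappa (tau i k) - 1 := by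
  rw [pureGauge, mul_sub, inv_mul_cancel₀ h]

theorem pureGauge_curvature_zero_general (k : Idx) (i j : Fin 4)
    (h0 : kappa k ≠ 0) (hi : kappa (tau i k) ≠ 0) (hj : kappa (tau j k) ≠ 0) :
    (pureGauge (tau i k) j - pureGauge k j) - (pureGauge (tau j k) i - pureGauge k i)
      + pureGauge k i * pureGauge (tau i k) j
      - pureGauge k j * pureGauge (tau j k) i = 0 := by
  simp only [pureGauge_eq_sub_one h0, pureGauge_eq_sub_one hi, pureGauge_eq_sub_one hj,
    tau_comm j i]
  apply curvature_sub_one_eq_zero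
  rw [mul_assoc, mul_inv_cancel_left₀ hi, mul_assoc, mul_inv_cancel_left₀ hj]

/-- Vanishing curvature for pure gauge: for `A = x⁻¹ ∪ d^c x` (at indices where
`κ ≠ 0`) the discrete curvature `F = d^c A + A ∪ A` vanishes, in components
`F^{ij}_k = Δ_i A^j_k - Δ_j A^i_k + A^i_k A^j_{τ_i k} - A^j_k A^i_{τ_j k} = 0`. -/
theorem pureGauge_curvature_zero (k : Idx) (i j : Fin 4)
    (h0 : kappa k ≠ 0) (hi : kappa (tau i k) ≠ 0) (hj : kappa (tau j k) ≠ 0)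
    (hij : kappa (tau i (tau j k)) ≠ 0) :
    (pureGauge (tau i k) j - pureGauge k j) - (pureGauge (tau j k) i - pureGauge k i)
      + pureGauge k i * pureGauge (tau i k) j
      - pureGauge k j * pureGauge (tau j k) i = 0 :=
  pureGauge_curvature_zero_general k i j h0 hi hj
end

section
/- With connection components A_k^1 = (-k₂𝐢 - k₃𝐣 - k₄𝐤)/(1+|κ|²), A_k^2 = (k₁𝐢 - k₄𝐣 + k₃𝐤)/(1+|κ|²), A_k^3 = (k₄𝐢 + k₁𝐣 - k₂𝐤)/(1+|κ|²), A_k^4 = (-k₃𝐢 + k₂𝐣 + k₁𝐤)/(1+|κ|²), the curvature components F_k^{ij} = Δ_i A_k^j - Δ_j A_k^i + A_k^i A_{τ_i k}^j - A_k^j A_{τ_j k}^i are pure imaginary quaternions (i.e., su(2)-valued) for all k if and only if k₁ = k₂ = k₃ = k₄; equivalently, the real part of F_k^{ij} equals M_i(k_i k_j + k_j) - M_j(k_i k_j + k_i), where M_i = 1/((1+|κ|²)(1+|τ_iκ|²)), and this vanishes for all i < j iff k₁ = k₂ = k₃ = k₄. -/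
/-- The anti-instanton connection components
`A_k^1 = (-k₂𝐢 - k₃𝐣 - k₄𝐤)/(1+|κ|²)`, `A_k^2 = (k₁𝐢 - k₄𝐣 + k₃𝐤)/(1+|κ|²)`,
`A_k^3 = (k₄𝐢 + k₁𝐣 - k₂𝐤)/(1+|κ|²)`, `A_k^4 = (-k₃𝐢 + k₂𝐣 + k₁𝐤)/(1+|κ|²)`. -/
noncomputable def Aconn (k : Idx) (i : Fin 4) : Quaternion ℝ :=
  (1 + Quaternion.normSq (kappa k))⁻¹ •
    (![(⟨0, -(k 1 : ℝ), -(k 2 : ℝ), -(k 3 : ℝ)⟩ : Quaternion ℝ),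
       ⟨0, (k 0 : ℝ), -(k 3 : ℝ), (k 2 : ℝ)⟩,
       ⟨0, (k 3 : ℝ), (k 0 : ℝ), -(k 1 : ℝ)⟩,
       ⟨0, -(k 2 : ℝ), (k 1 : ℝ), (k 0 : ℝ)⟩] i)

/-- The discrete curvature components
`F_k^{ij} = Δ_i A_k^j - Δ_j A_k^i + A_k^i A_{τ_i k}^j - A_k^j A_{τ_j k}^i`. -/
noncomputable def Fcurv (k : Idx) (i j : Fin 4) : Quaternion ℝ :=
  (Aconn (tau i k) j - Aconn k j) - (Aconn (tau j k) i - Aconn k i)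
    + Aconn k i * Aconn (tau i k) j - Aconn k j * Aconn (tau j k) i

/-! The connection components are pure imaginary, so only the quadratic terms contribute to
`Re F_k^{ij}`, and a direct computation gives `Re (A_k^i A_{τ_i k}^j) = M_i (k_i k_j + k_j)`.
Since `|τ_i κ|² = |κ|² + 2 k_i + 1`, the difference `M_i (k_i k_j + k_j) - M_j (k_i k_j + k_i)`
factors as `(k_j - k_i) P` divided by a positive number, with
`P = 2 + |κ|² + 2 k_i k_j + 2 k_i + 2 k_j ≥ (k_i + k_j + 1)² + 1`. Hence `Re F_k^{ij} = 0` iff `k_i = k_j`. -/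

lemma inv_mul_sub_inv_mul_eq_zero_iff {x y q : ℝ} (hq : x ^ 2 + y ^ 2 ≤ q) :
    ((1 + q) * (1 + (q + 2 * x + 1)))⁻¹ * (x * y + y)
      - ((1 + q) * (1 + (q + 2 * y + 1)))⁻¹ * (x * y + x) = 0 ↔ x = y := by
  have hq₀ : 0 < 1 + q := by nlinarith
  have hx : 0 < 1 + (q + 2 * x + 1) := by nlinarith [sq_nonneg (x + 1)]
  have hy : 0 < 1 + (q + 2 * y + 1) := by nlinarith [sq_nonneg (y + 1)]
  have hP : 0 < 2 + q + 2 * x * y + 2 * x + 2 * y := by nlinarith [sq_nonneg (x + y + 1)]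
  have key : ((1 + q) * (1 + (q + 2 * x + 1)))⁻¹ * (x * y + y)
      - ((1 + q) * (1 + (q + 2 * y + 1)))⁻¹ * (x * y + x)
      = (y - x) * (2 + q + 2 * x * y + 2 * x + 2 * y)
        / ((1 + q) * (1 + (q + 2 * x + 1)) * (1 + (q + 2 * y + 1))) := by
    field_simp
    ring
  rw [key, div_eq_zero_iff, mul_eq_zero, sub_eq_zero, eq_comm]
  simp [hP.ne', hq₀.ne', hx.ne', hy.ne']

section

variable (k : Idx)

lemma normSq_kappa : Quaternion.normSq (kappa k) = ∑ m, (k m : ℝ) ^ 2 := by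
  rw [Quaternion.normSq_def', Fin.sum_univ_four]
  rfl

lemma normSq_kappa_tau (i : Fin 4) :
    Quaternion.normSq (kappa (tau i k)) = Quaternion.normSq (kappa k) + 2 * k i + 1 := by
  fin_cases i <;> simp [normSq_kappa, tau, Fin.sum_univ_four, Function.update_apply] <;> ring

lemma sq_add_sq_le_normSq_kappa {i j : Fin 4} (hij : i ≠ j) :
    (k i : ℝ) ^ 2 + (k j : ℝ) ^ 2 ≤ Quaternion.normSq (kappa k) := by
  rw [normSq_kappa, ← Finset.sum_pair hij (f := fun m => (k m : ℝ) ^ 2)]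
  exact Finset.sum_le_sum_of_subset_of_nonneg (Finset.subset_univ _) fun m _ _ => sq_nonneg _

lemma Aconn_re (i : Fin 4) : (Aconn k i).re = 0 := by
  fin_cases i <;> simp [Aconn]

noncomputable def Mcoef (i : Fin 4) : ℝ :=
  ((1 + Quaternion.normSq (kappa k)) * (1 + Quaternion.normSq (kappa (tau i k))))⁻¹

lemma Aconn_mul_Aconn_tau_re {i j : Fin 4} (hij : i ≠ j) :
    (Aconn k i * Aconn (tau i k) j).re = Mcoef k i * (k i * k j + k j) := by
  rw [Quaternion.re_mul]
  fin_cases i <;> fin_cases j <;> simp [Aconn, Mcoef, tau] at hij ⊢ <;> ring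

lemma Fcurv_re {i j : Fin 4} (hij : i ≠ j) :
    (Fcurv k i j).re = Mcoef k i * (k i * k j + k j) - Mcoef k j * (k i * k j + k i) := by
  simp only [Fcurv, Quaternion.re_add, Quaternion.re_sub, Aconn_re, Aconn_mul_Aconn_tau_re k hij,
    Aconn_mul_Aconn_tau_re k hij.symm]
  ring

lemma Fcurv_re_eq_zero_iff {i j : Fin 4} (hij : i ≠ j) : (Fcurv k i j).re = 0 ↔ k i = k j := by
  rw [Fcurv_re k hij, Mcoef, Mcoef, normSq_kappa_tau, normSq_kappa_tau,
    inv_mul_sub_inv_mul_eq_zero_iff (sq_add_sq_le_normSq_kappa k hij), Int.cast_inj]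

end

/-- For the anti-instanton connection, the curvature components `F_k^{ij}` are
pure imaginary quaternions (i.e. `su(2)`-valued) for all `i < j` if and only if
`k₁ = k₂ = k₃ = k₄`. -/
theorem Fcurv_su2_iff (k : Idx) :
    (∀ i j : Fin 4, i < j → (Fcurv k i j).re = 0) ↔
      (k 0 = k 1 ∧ k 1 = k 2 ∧ k 2 = k 3) := by
  constructor
  · intro h
    exact ⟨(Fcurv_re_eq_zero_iff k (by decide)).1 (h 0 1 (by decide)),
      (Fcurv_re_eq_zero_iff k (by decide)).1 (h 1 2 (by decide)),
      (Fcurv_re_eq_zero_iff k (by decide)).1 (h 2 3 (by decide))⟩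
  · rintro ⟨h₀₁, h₁₂, h₂₃⟩ i j hij
    have hconst : ∀ m, k m = k 0 := by
      intro m
      fin_cases m <;> simp [h₀₁, h₁₂, h₂₃]
    rw [Fcurv_re_eq_zero_iff k hij.ne, hconst i, hconst j]
end

section
/- For a fixed index k = (k₁,k₂,k₃,k₄) ∈ ℤ⁴ with M_i = 1/((1+|κ|²)(1+|τ_iκ|²)) > 0, the system of equations M_i(k_i k_j + k_j) - M_j(k_i k_j + k_i) = 0 for all 1 ≤ i < j ≤ 4 holds if and only if k₁ = k₂ = k₃ = k₄. -/
open scoped BigOperators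

/-- `1 + |κ|² = 1 + k₁² + k₂² + k₃² + k₄²`. -/
def nrm (k : Idx) : ℤ := 1 + ∑ l, (k l) ^ 2

/-- `M_i = 1/((1+|κ|²)(1+|τ_i κ|²))`. -/
def Mfac (k : Idx) (i : Fin 4) : ℚ := 1 / ((nrm k : ℚ) * (nrm (tau i k) : ℚ))

lemma nrm_pos (k : Idx) : 0 < nrm k := by
  have h : 0 ≤ ∑ l, (k l) ^ 2 := Finset.sum_nonneg fun l _ => sq_nonneg _
  unfold nrm; linarith

lemma nrm_tau (k : Idx) (i : Fin 4) : nrm (tau i k) = nrm k + 2 * k i + 1 := by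
  unfold nrm tau
  have h : ∀ l, (Function.update k i (k i + 1) l) ^ 2
      = Function.update (fun l => (k l) ^ 2) i ((k i + 1) ^ 2) l := by
    intro l; by_cases h : l = i <;> simp [h, Function.update]
  simp_rw [h]
  rw [Finset.sum_update_of_mem (Finset.mem_univ i)]
  have h2 : ∑ l ∈ Finset.univ \ {i}, (k l) ^ 2 + (k i) ^ 2 = ∑ l, (k l) ^ 2 := by
    rw [show (Finset.univ \ {i} : Finset (Fin 4)) = Finset.univ.erase i by
      rw [Finset.erase_eq]]
    exact Finset.sum_erase_add _ _ (Finset.mem_univ i)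
  ring_nf
  ring_nf at h2
  linarith

lemma nrm_ge (k : Idx) {i j : Fin 4} (h : i ≠ j) : k i ^ 2 + k j ^ 2 + 1 ≤ nrm k := by
  have hs := Finset.sum_le_sum_of_subset_of_nonneg
    (Finset.subset_univ ({i, j} : Finset (Fin 4))) (fun l _ _ => sq_nonneg (k l))
  rw [Finset.sum_pair h] at hs
  unfold nrm; linarith

lemma key (k : Idx) {i j : Fin 4} (hij : i ≠ j) :
    Mfac k i * ((k i * k j + k j : ℤ) : ℚ) -
      Mfac k j * ((k i * k j + k i : ℤ) : ℚ) = 0 ↔ k i = k j := by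
  have hN := nrm_pos k
  have hAi := nrm_pos (tau i k)
  have hAj := nrm_pos (tau j k)
  have hNQ : (nrm k : ℚ) ≠ 0 := by exact_mod_cast hN.ne'
  have hAiQ : (nrm (tau i k) : ℚ) ≠ 0 := by exact_mod_cast hAi.ne'
  have hAjQ : (nrm (tau j k) : ℚ) ≠ 0 := by exact_mod_cast hAj.ne'
  have hZ : ((k i * k j + k j) * nrm (tau j k) = (k i * k j + k i) * nrm (tau i k))
      ↔ k i = k j := by
    rw [nrm_tau, nrm_tau]
    constructor
    · intro h
      have hfac : 0 < nrm k + 2 * k i * k j + 2 * k i + 2 * k j + 1 := by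
        have := nrm_ge k hij
        nlinarith [sq_nonneg (k i + k j + 1)]
      have h2 : (k j - k i) * (nrm k + 2 * k i * k j + 2 * k i + 2 * k j + 1) = 0 := by
        linear_combination h
      rcases mul_eq_zero.mp h2 with h3 | h3
      · omega
      · omega
    · intro h; rw [h]
  rw [← hZ]
  unfold Mfac
  rw [sub_eq_zero, div_mul_eq_mul_div, div_mul_eq_mul_div,
    div_eq_div_iff (by positivity) (by positivity)]
  constructor
  · intro h
    have h' : ((k i * k j + k j) * nrm (tau j k) : ℚ) = ((k i * k j + k i) * nrm (tau i k) : ℚ) := by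
      apply mul_left_cancel₀ hNQ
      push_cast at h ⊢
      linear_combination h
    exact_mod_cast h'
  · intro h
    have h' : ((k i * k j + k j) * nrm (tau j k) : ℚ) = ((k i * k j + k i) * nrm (tau i k) : ℚ) := by
      exact_mod_cast h
    push_cast at h' ⊢
    linear_combination (nrm k : ℚ) * h'

/-- For a fixed index `k ∈ ℤ⁴`, the `M_i` are positive and the system
`M_i(k_i k_j + k_j) - M_j(k_i k_j + k_i) = 0` for all `i < j` holds if and only
if `k₁ = k₂ = k₃ = k₄`. -/
theorem Mfac_system_iff (k : Idx) :
    (∀ i : Fin 4, 0 < Mfac k i) ∧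
    ((∀ i j : Fin 4, i < j →
        Mfac k i * ((k i * k j + k j : ℤ) : ℚ) -
          Mfac k j * ((k i * k j + k i : ℤ) : ℚ) = 0) ↔
      (k 0 = k 1 ∧ k 1 = k 2 ∧ k 2 = k 3)) := by
  constructor
  · intro i
    have hN := nrm_pos k
    have hA := nrm_pos (tau i k)
    unfold Mfac
    have hNQ : (0 : ℚ) < (nrm k : ℚ) := by exact_mod_cast hN
    have hAQ : (0 : ℚ) < (nrm (tau i k) : ℚ) := by exact_mod_cast hA
    positivity
  · constructor
    · intro h
      refine ⟨?_, ?_, ?_⟩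
      · exact (key k (by decide : (0 : Fin 4) ≠ 1)).mp (h 0 1 (by decide))
      · exact (key k (by decide : (1 : Fin 4) ≠ 2)).mp (h 1 2 (by decide))
      · exact (key k (by decide : (2 : Fin 4) ≠ 3)).mp (h 2 3 (by decide))
    · rintro ⟨h01, h12, h23⟩ i j hij
      rw [key k hij.ne]
      fin_cases i <;> fin_cases j <;> simp_all
end
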